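/- arXiv:1109.3963 — 3 statements merged into one kernel-verified Lean document; each statement's English description precedes it below -/
import Mathlib

section
/- Let σ be a permutation of a set of size k+2 whose cycle type is 1^1 a^b (one fixed point and b cycles of length a) with a·b = k+1, where k ≡ 2 or 3 mod 4 and μ(a) ≠ 0. Then sign(σ) = 1. -/
open ArithmeticFunction

theorem sign_eq_one_of_cycleType_one_fixed_point
    (k : ℕ) (hk : k % 4 = 2 ∨ k % 4 = 3)
    (γ : Equiv.Perm (Fin (k + 2))) (a b : ℕ) (ha : 2 ≤ a)
    (hab : a * b = k + 1) (hmu : moebius a ≠ 0)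
    (hγ : γ.cycleType = Multiset.replicate b a) :
    Equiv.Perm.sign γ = 1 := by
  have hsq : Squarefree a := by
    by_contra h
    exact hmu (ArithmeticFunction.moebius_eq_zero_of_not_squarefree h)
  have hs := Equiv.Perm.sign_of_cycleType γ
  rw [hγ] at hs
  simp [Multiset.sum_replicate] at hs
  rw [hs]
  have heven : Even (b * a + b) := by
    rcases Nat.even_or_odd a with hae | hao
    · -- a even, squarefree → a % 4 = 2; then b must be even
      have hb : Even b := by
        by_contra hbo
        rw [Nat.not_even_iff_odd] at hbo
        have h4 : ¬ (4 ∣ a) := by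
          intro hd
          have : ¬ Squarefree a := by
            intro hsq'
            have := hsq' 2 (by omega : (2:ℕ)*2 ∣ a)
            simp at this
          exact this hsq
        have ha4 : a % 4 = 2 := by
          rcases hae with ⟨c, hc⟩
          omega
        -- a*b % 4 = 2 since b odd
        have hmm := Nat.mul_mod a b 4
        have hb4 : b % 4 = 1 ∨ b % 4 = 3 := by
          rcases hbo with ⟨c, hc⟩; omega
        have : (a * b) % 4 = 2 := by
          rcases hb4 with h | h <;> rw [hmm, ha4, h]
        omega
      obtain ⟨c, hc⟩ := hb; exact ⟨c * a + c, by subst hc; ring⟩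
    · obtain ⟨c, hc⟩ := hao; exact ⟨b * (c + 1), by subst hc; ring⟩
  exact Even.neg_one_pow heven
end

section
/- Define the class function χ_k on the symmetric group S_{k+2} by: χ_k(γ) = k! if γ = identity (cycle type 1^{k+2}); χ_k(γ) = (b-1)!·a^{b-1}·μ(a) if γ has cycle type 1^1 a^b (with a ≥ 2, a·b = k+1); χ_k(γ) = -(b-1)!·a^{b-1}·μ(a) if γ has cycle type a^b (with a ≥ 2, a·b = k+2); and χ_k(γ) = 0 otherwise. If k ≡ 2 or 3 mod 4, then for every γ ∈ S_{k+2} with χ_k(γ) ≠ 0, sign(γ) = 1. -/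
open ArithmeticFunction

lemma kontsevich_aux_even (a b k : ℕ) (hsf : Squarefree a)
    (hk : k % 4 = 2 ∨ k % 4 = 3)
    (hab : a * b = k + 1 ∨ a * b = k + 2) :
    Even (b * a + b) := by
  rcases Nat.even_or_odd a with hae | hao
  · obtain ⟨c, hc⟩ := hae
    have hcodd : Odd c := by
      rcases Nat.even_or_odd c with h | h
      · exfalso
        obtain ⟨d, hd⟩ := h
        have h4 : (2 : ℕ) * 2 ∣ a := ⟨d, by omega⟩
        have := Nat.isUnit_iff.mp (hsf 2 h4)
        omega
      · exact h
    have h2m : 2 ∣ a * b := ⟨c * b, by rw [hc]; ring⟩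
    have h4m : 4 ∣ a * b := by omega
    have h2cb : 2 ∣ c * b := by
      rcases h4m with ⟨e, he⟩
      refine ⟨e, ?_⟩
      have : a * b = c * b + c * b := by rw [hc]; ring
      omega
    have hb : Even b := by
      have hcb : Even (c * b) := by
        obtain ⟨e, he⟩ := h2cb
        exact ⟨e, by omega⟩
      rcases Nat.even_mul.mp hcb with h | h
      · exact absurd h (Nat.not_even_iff_odd.mpr hcodd)
      · exact h
    exact (hb.mul_right a).add hb
  · have : b * a + b = b * (a + 1) := by ring
    rw [this]
    exact (hao.add_one).mul_left b

theorem kontsevich_character_supported_on_even_perms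
    (k : ℕ) (hk : k % 4 = 2 ∨ k % 4 = 3)
    (χ : Equiv.Perm (Fin (k + 2)) → ℚ)
    (hid : χ 1 = (k.factorial : ℚ))
    (hfix : ∀ (γ : Equiv.Perm (Fin (k + 2))) (a b : ℕ), 2 ≤ a → a * b = k + 1 →
      γ.cycleType = Multiset.replicate b a →
      χ γ = ((b - 1).factorial : ℚ) * (a : ℚ) ^ (b - 1) * (moebius a : ℚ))
    (hnofix : ∀ (γ : Equiv.Perm (Fin (k + 2))) (a b : ℕ), 2 ≤ a → a * b = k + 2 →
      γ.cycleType = Multiset.replicate b a →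
      χ γ = -(((b - 1).factorial : ℚ) * (a : ℚ) ^ (b - 1) * (moebius a : ℚ)))
    (hother : ∀ γ : Equiv.Perm (Fin (k + 2)), γ ≠ 1 →
      (¬ ∃ a b : ℕ, 2 ≤ a ∧ a * b = k + 1 ∧ γ.cycleType = Multiset.replicate b a) →
      (¬ ∃ a b : ℕ, 2 ≤ a ∧ a * b = k + 2 ∧ γ.cycleType = Multiset.replicate b a) →
      χ γ = 0) :
    ∀ γ : Equiv.Perm (Fin (k + 2)), χ γ ≠ 0 → Equiv.Perm.sign γ = 1 := by
  intro γ hχ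
  by_cases h1 : γ = 1
  · subst h1; simp
  · have sign_eq : ∀ a b : ℕ, γ.cycleType = Multiset.replicate b a →
        Even (b * a + b) → Equiv.Perm.sign γ = 1 := by
      intro a b hct hev
      rw [Equiv.Perm.sign_of_cycleType, hct]
      simp only [Multiset.sum_replicate, Multiset.card_replicate, smul_eq_mul]
      exact Even.neg_one_pow hev
    by_cases hA : ∃ a b : ℕ, 2 ≤ a ∧ a * b = k + 1 ∧ γ.cycleType = Multiset.replicate b a
    · obtain ⟨a, b, ha, hab, hct⟩ := hA
      have heq := hfix γ a b ha hab hct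
      have hsf : Squarefree a := by
        by_contra h
        exact hχ (by rw [heq, moebius_eq_zero_of_not_squarefree h]; push_cast; ring)
      exact sign_eq a b hct (kontsevich_aux_even a b k hsf hk (Or.inl hab))
    · by_cases hB : ∃ a b : ℕ, 2 ≤ a ∧ a * b = k + 2 ∧ γ.cycleType = Multiset.replicate b a
      · obtain ⟨a, b, ha, hab, hct⟩ := hB
        have heq := hnofix γ a b ha hab hct
        have hsf : Squarefree a := by
          by_contra h
          exact hχ (by rw [heq, moebius_eq_zero_of_not_squarefree h]; push_cast; ring)
        exact sign_eq a b hct (kontsevich_aux_even a b k hsf hk (Or.inr hab))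
      · exact absurd (hother γ h1 hA hB) hχ
end

section
/- For k ≡ 0, 1, or 3 mod 4, define the class function L_k on S_k by: L_k(identity) = (k-1)!, L_k(γ) = (b-1)!·a^{b-1}·μ(a) if γ has cycle type a^b with a·b = k and a ≥ 2, and L_k(γ) = 0 otherwise. Then L_k(γ) ≠ 0 implies sign(γ) = 1. -/
open ArithmeticFunction

theorem free_lie_character_supported_on_even_perms
    (k : ℕ) (hk : k % 4 = 0 ∨ k % 4 = 1 ∨ k % 4 = 3)
    (L : Equiv.Perm (Fin k) → ℚ)
    (hid : L 1 = ((k - 1).factorial : ℚ))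
    (hcyc : ∀ (γ : Equiv.Perm (Fin k)) (a b : ℕ), 2 ≤ a → a * b = k →
      γ.cycleType = Multiset.replicate b a →
      L γ = ((b - 1).factorial : ℚ) * (a : ℚ) ^ (b - 1) * (moebius a : ℚ))
    (hother : ∀ γ : Equiv.Perm (Fin k), γ ≠ 1 →
      (¬ ∃ a b : ℕ, 2 ≤ a ∧ a * b = k ∧ γ.cycleType = Multiset.replicate b a) →
      L γ = 0) :
    ∀ γ : Equiv.Perm (Fin k), L γ ≠ 0 → Equiv.Perm.sign γ = 1 := by
  intro γ hL
  by_cases h1 : γ = 1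
  · simp [h1]
  by_cases h2 : ∃ a b : ℕ, 2 ≤ a ∧ a * b = k ∧ γ.cycleType = Multiset.replicate b a
  · obtain ⟨a, b, ha, hab, hct⟩ := h2
    have hval := hcyc γ a b ha hab hct
    rw [hval] at hL
    have hμ : (moebius a : ℚ) ≠ 0 := by
      intro h
      simp [h] at hL
    have hμ' : moebius a ≠ 0 := by exact_mod_cast hμ
    have hsq : Squarefree a := moebius_ne_zero_iff_squarefree.mp hμ'
    have hsign := Equiv.Perm.sign_of_cycleType γ
    rw [hct] at hsign
    simp only [Multiset.sum_replicate, Multiset.card_replicate, smul_eq_mul] at hsign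
    rw [hsign]
    apply Even.neg_one_pow
    have key : Odd a ∨ Even b := by
      rcases Nat.even_or_odd a with hae | hao
      · right
        obtain ⟨c, hc⟩ := hae
        have h4 : ¬ (4 ∣ a) := by
          intro ⟨d, hd⟩
          have h2a := hsq 2 ⟨d, by omega⟩
          exact absurd h2a (by norm_num)
        have hco : Odd c := by
          rcases Nat.even_or_odd c with ⟨d, hd⟩ | h
          · exact absurd ⟨d, by omega⟩ h4
          · exact h
        have hm : 2 * (c * b) = k := by
          rw [← hab, hc]; ring
        have hkeven : k % 2 = 0 := by omega
        have hk4 : k % 4 = 0 := by omega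
        have h2cb : 2 ∣ c * b := by
          set m := c * b with hmdef
          omega
        rcases (Nat.even_mul).mp (even_iff_two_dvd.mpr h2cb) with h | h
        · exact absurd h (Nat.not_even_iff_odd.mpr hco)
        · exact h
      · left; exact hao
    rcases key with ⟨c, hc⟩ | ⟨e, he⟩
    · exact ⟨b * c + b, by rw [hc]; ring⟩
    · exact ⟨e * a + e, by rw [he]; ring⟩
  · exact absurd (hother γ h1 h2) hL
end
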